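/- Let $X, Y$ be Banach spaces, $\bar{a} \in X$, $A^\dagger \in B(X,Y)$, $A \in B(Y,X)$ with $A$ injective, and $F : X \to Y$ Fréchet differentiable. Suppose $\|AF(\bar a)\|_X \le Y_0$, $\|I - AA^\dagger\|_{B(X)} \le Z_0$, $\|A(DF(\bar a) - A^\dagger)\|_{B(X)} \le Z_1$, and $\|A(DF(b) - DF(\bar a))\|_{B(X)} \le Z_2(r) r$ for all $b$ in the closed ball of radius $r$ about $\bar a$, where $Z_2$ is a polynomial with nonnegative coefficients. If $p(r_0) := Z_2(r_0) r_0^2 - (1 - Z_0 - Z_1) r_0 + Y_0 < 0$ for some $r_0 > 0$, then there exists a unique $\tilde a$ in the closed ball of radius $r_0$ around $\bar a$ with $F(\tilde a) = 0$. -/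

import Mathlib

/-!
The zeros of `F` in the ball are the fixed points of the Newton-like operator
`T x = x - A (F x)`, since `A` is injective. Splitting
`I - A DF(b) = (I - A A†) - A (DF(ā) - A†) - A (DF(b) - DF(ā))` bounds `‖DT‖` on the closed ball of
radius `r₀` by `κ = Z₀ + Z₁ + Z₂(r₀) r₀`, and `p(r₀) < 0` says exactly `Y₀ + κ r₀ < r₀`. Hence
`κ < 1` and, by the mean value inequality, `T` is a contraction of the ball into itself, so the
Banach fixed point theorem applies.
-/

open Metric Set Function NNReal

theorem LipschitzOnWith.existsUnique_isFixedPt_closedBall {α : Type*} [MetricSpace α]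
    [CompleteSpace α] {f : α → α} {K : ℝ≥0} {c : α} {r : ℝ}
    (hf : LipschitzOnWith K f (closedBall c r)) (hK : K < 1) (hc : dist (f c) c + K * r ≤ r) :
    ∃! x ∈ closedBall c r, IsFixedPt f x := by
  have hK' : (K : ℝ) < 1 := hK
  have hr : 0 ≤ r := by nlinarith [dist_nonneg (x := f c) (y := c), K.coe_nonneg]
  have hmaps : MapsTo f (closedBall c r) (closedBall c r) := fun x hx =>
    calc dist (f x) c ≤ dist (f x) (f c) + dist (f c) c := dist_triangle _ _ _
      _ ≤ K * dist x c + dist (f c) c := by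
        gcongr; exact hf.dist_le_mul x hx c (mem_closedBall_self hr)
      _ ≤ K * r + dist (f c) c := by gcongr; exact mem_closedBall.1 hx
      _ ≤ r := by linarith
  obtain ⟨x, hx, hfix, -⟩ := ContractingWith.exists_fixedPoint' isClosed_closedBall.isComplete
    hmaps ⟨hK, hf.mapsToRestrict hmaps⟩ (mem_closedBall_self hr) (edist_ne_top _ _)
  refine ⟨x, ⟨hx, hfix⟩, fun y ⟨hy, hfy⟩ => dist_le_zero.1 ?_⟩
  have hcontract := hf.dist_le_mul y hy x hx
  rw [hfy.eq, hfix.eq] at hcontract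
  nlinarith [dist_nonneg (x := y) (y := x)]

theorem existsUnique_isFixedPt_closedBall_of_norm_hasFDerivWithinAt_le {E : Type*}
    [NormedAddCommGroup E] [NormedSpace ℝ E] [CompleteSpace E] {f : E → E} {f' : E → E →L[ℝ] E}
    {c : E} {r κ : ℝ} (hf : ∀ x ∈ closedBall c r, HasFDerivWithinAt f (f' x) (closedBall c r) x)
    (bound : ∀ x ∈ closedBall c r, ‖f' x‖ ≤ κ) (hκ : κ < 1) (hc : ‖f c - c‖ + κ * r ≤ r) :
    ∃! x ∈ closedBall c r, IsFixedPt f x := by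
  have hr : 0 ≤ r := by nlinarith [norm_nonneg (f c - c)]
  have hκ₀ : 0 ≤ κ := (norm_nonneg _).trans (bound c (mem_closedBall_self hr))
  refine LipschitzOnWith.existsUnique_isFixedPt_closedBall (K := ⟨κ, hκ₀⟩) ?_ hκ ?_
  · exact (convex_closedBall c r).lipschitzOnWith_of_nnnorm_hasFDerivWithin_le hf bound
  · rw [dist_eq_norm]; exact hc

theorem ContinuousLinearMap.norm_id_sub_comp_le {𝕜 E F : Type*} [NontriviallyNormedField 𝕜]
    [SeminormedAddCommGroup E] [NormedSpace 𝕜 E] [SeminormedAddCommGroup F] [NormedSpace 𝕜 F]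
    (A : F →L[𝕜] E) (B D₀ D : E →L[𝕜] F) :
    ‖ContinuousLinearMap.id 𝕜 E - A.comp D‖ ≤
      ‖ContinuousLinearMap.id 𝕜 E - A.comp B‖ + ‖A.comp (D₀ - B)‖ + ‖A.comp (D - D₀)‖ := by
  have hsplit : ContinuousLinearMap.id 𝕜 E - A.comp D =
      ContinuousLinearMap.id 𝕜 E - A.comp B - A.comp (D₀ - B) - A.comp (D - D₀) := by
    simp only [comp_sub]; abel
  rw [hsplit]
  exact (norm_sub_le _ _).trans (by gcongr; exact norm_sub_le _ _)

theorem isFixedPt_sub_map_iff {E F G : Type*} [AddGroup E] [AddGroup F] [FunLike G F E]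
    [AddMonoidHomClass G F E] {A : G} (hA : Injective A) {g : E → F} {x : E} :
    IsFixedPt (fun x => x - A (g x)) x ↔ g x = 0 := by
  simp only [IsFixedPt, sub_eq_self, map_eq_zero_iff A hA]

theorem radii_polynomial_theorem_general
    {X Y : Type*} [NormedAddCommGroup X] [NormedSpace ℝ X] [CompleteSpace X]
    [NormedAddCommGroup Y] [NormedSpace ℝ Y]
    (F : X → Y) (DF : X → X →L[ℝ] Y) (hF : ∀ x, HasFDerivAt F (DF x) x)
    (abar : X) (Adag : X →L[ℝ] Y) (A : Y →L[ℝ] X) (hA : Function.Injective A)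
    (Y0 Z0 Z1 : ℝ)
    (Z2 : Polynomial ℝ)
    (hY0 : ‖A (F abar)‖ ≤ Y0)
    (hZ0 : ‖ContinuousLinearMap.id ℝ X - A.comp Adag‖ ≤ Z0)
    (hZ1 : ‖A.comp (DF abar - Adag)‖ ≤ Z1)
    (hZ2b : ∀ r : ℝ, 0 < r → ∀ b ∈ Metric.closedBall abar r,
      ‖A.comp (DF b - DF abar)‖ ≤ Z2.eval r * r)
    (r0 : ℝ) (hr0 : 0 < r0)
    (hp : Z2.eval r0 * r0 ^ 2 - (1 - Z0 - Z1) * r0 + Y0 < 0) :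
    ∃! a : X, a ∈ Metric.closedBall abar r0 ∧ F a = 0 := by
  set κ := Z0 + Z1 + Z2.eval r0 * r0
  have hderiv : ∀ x, HasFDerivAt (fun x => x - A (F x))
      (ContinuousLinearMap.id ℝ X - A.comp (DF x)) x := fun x =>
    (hasFDerivAt_id x).sub (A.hasFDerivAt.comp x (hF x))
  have hbound : ∀ x ∈ closedBall abar r0, ‖ContinuousLinearMap.id ℝ X - A.comp (DF x)‖ ≤ κ :=
    fun x hx => (A.norm_id_sub_comp_le Adag (DF abar) (DF x)).trans
      (add_le_add (add_le_add hZ0 hZ1) (hZ2b r0 hr0 x hx))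
  have hκr0 : κ * r0 = Z2.eval r0 * r0 ^ 2 + (Z0 + Z1) * r0 := by ring
  have hcenter : ‖abar - A (F abar) - abar‖ + κ * r0 ≤ r0 := by
    rw [sub_sub_cancel_left, norm_neg]; linarith
  have hκ1 : κ < 1 := by nlinarith [norm_nonneg (A (F abar))]
  have hfix := existsUnique_isFixedPt_closedBall_of_norm_hasFDerivWithinAt_le
    (fun x _ => (hderiv x).hasFDerivWithinAt) hbound hκ1 hcenter
  exact (existsUnique_congr fun x => and_congr_right fun _ => isFixedPt_sub_map_iff hA).1 hfix

/-- **Radii polynomial theorem.** -/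
theorem radii_polynomial_theorem
    {X Y : Type*} [NormedAddCommGroup X] [NormedSpace ℝ X] [CompleteSpace X]
    [NormedAddCommGroup Y] [NormedSpace ℝ Y] [CompleteSpace Y]
    (F : X → Y) (DF : X → X →L[ℝ] Y) (hF : ∀ x, HasFDerivAt F (DF x) x)
    (abar : X) (Adag : X →L[ℝ] Y) (A : Y →L[ℝ] X) (hA : Function.Injective A)
    (Y0 Z0 Z1 : ℝ) (hY0' : 0 ≤ Y0) (hZ0' : 0 ≤ Z0) (hZ1' : 0 ≤ Z1)
    (Z2 : Polynomial ℝ) (hZ2 : ∀ i, 0 ≤ Z2.coeff i)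
    (hY0 : ‖A (F abar)‖ ≤ Y0)
    (hZ0 : ‖ContinuousLinearMap.id ℝ X - A.comp Adag‖ ≤ Z0)
    (hZ1 : ‖A.comp (DF abar - Adag)‖ ≤ Z1)
    (hZ2b : ∀ r : ℝ, 0 < r → ∀ b ∈ Metric.closedBall abar r,
      ‖A.comp (DF b - DF abar)‖ ≤ Z2.eval r * r)
    (r0 : ℝ) (hr0 : 0 < r0)
    (hp : Z2.eval r0 * r0 ^ 2 - (1 - Z0 - Z1) * r0 + Y0 < 0) :
    ∃! a : X, a ∈ Metric.closedBall abar r0 ∧ F a = 0 :=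
  radii_polynomial_theorem_general F DF hF abar Adag A hA Y0 Z0 Z1 Z2 hY0 hZ0 hZ1 hZ2b r0 hr0 hp
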